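/- arXiv:2509.25972 — 5 statements merged into one kernel-verified Lean document; each statement's English description precedes it below -/
import Mathlib

section
/- Let Z be a commutative ring with unity, let g, ω ∈ J(Z), and let n ≥ 2 be an integer. Then the n-th compositional iterate ω^[n] equals g if and only if n·ω₂ = g₂ and, for every k ≥ 3, n·ω_k = g_k − r_k · (∑_{s=0}^{n−2} (n−1−s)·M_k^s) · c_k, where M_k is the (k−2)×(k−2) matrix over Z (rows and columns indexed by 0 ≤ i, j ≤ k−3) whose (i,j) entry is the coefficient of x^{i+2} in ω^{j+2}, r_k is the row vector of length k−2 whose j-th entry is the coefficient of x^k in ω^{j+2}, and c_k is the column vector of length k−2 whose j-th entry is ω_{j+2}. -/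
open PowerSeries Finset

/-- Composition `f ∘ g` of formal power series (substitution of `g` into `f`).
This coefficientwise formula agrees with the usual substitution whenever the
constant coefficient of `g` is zero, since then `g ^ j` has order at least `j`. -/
noncomputable def psComp {Z : Type*} [CommRing Z] (f g : Z⟦X⟧) : Z⟦X⟧ :=
  PowerSeries.mk fun n => ∑ j ∈ Finset.range (n + 1), coeff j f * coeff n (g ^ j)

/-- The `m`-th compositional iterate: `ω^[0] = X` and `ω^[m+1] = ω ∘ ω^[m]`. -/
noncomputable def psIter {Z : Type*} [CommRing Z] (ω : Z⟦X⟧) : ℕ → Z⟦X⟧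
  | 0 => PowerSeries.X
  | m + 1 => psComp ω (psIter ω m)

/-!
Because `g ^ j` starts at `x ^ j`, the coefficient of `x ^ m` in `f ∘ g` only involves
`f₁, …, f_m`. Hence right composition with `ω` acts affinely on the coefficient vector
`v(f) = (f₂, …, f_{k-1})` of `f ∈ J(Z)`: `v(f ∘ ω) = c_k + M_k v(f)` and
`(f ∘ ω)_k = ω_k + r_k · v(f) + f_k`. Since substitution is associative,
`ω^[m+1] = ω^[m] ∘ ω`, so `v(ω^[m]) = (∑_{s<m} M_k ^ s) c_k` and
`(ω^[n])_k = n ω_k + r_k (∑_{m<n} ∑_{s<m} M_k ^ s) c_k`; exchanging the double sum gives the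
weights `n - 1 - s`. For `k = 2` the vectors are empty.
-/

open Matrix

section

variable {Z : Type*} [CommRing Z]

lemma coeff_pow_of_lt {g : Z⟦X⟧} (hg : constantCoeff g = 0) {j n : ℕ} (h : n < j) :
    coeff n (g ^ j) = 0 :=
  X_pow_dvd_iff.mp (pow_dvd_pow_of_dvd (X_dvd_iff.mpr hg) j) n h

lemma coeff_pow_self {g : Z⟦X⟧} (hg : constantCoeff g = 0) (j : ℕ) :
    coeff j (g ^ j) = coeff 1 g ^ j := by
  obtain ⟨u, rfl⟩ := X_dvd_iff.mpr hg
  have h := coeff_X_pow_mul (u ^ j) j 0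
  rw [zero_add] at h
  rw [mul_pow, h, coeff_zero_eq_constantCoeff_apply, map_pow, coeff_succ_X_mul,
    coeff_zero_eq_constantCoeff_apply]

lemma psComp_eq_subst (f : Z⟦X⟧) {g : Z⟦X⟧} (hg : constantCoeff g = 0) :
    psComp f g = f.subst g := by
  ext n
  rw [coeff_subst' (HasSubst.of_constantCoeff_zero' hg), finsum_eq_sum_of_support_subset
    (s := range (n + 1))]
  · simp [psComp]
  · intro j hj
    by_contra hjn
    simp only [coe_range, Set.mem_Iio, not_lt] at hjn
    simp [coeff_pow_of_lt hg (Nat.lt_of_succ_le hjn)] at hj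

lemma constantCoeff_psComp (f g : Z⟦X⟧) : constantCoeff (psComp f g) = constantCoeff f := by
  rw [← coeff_zero_eq_constantCoeff_apply, ← coeff_zero_eq_constantCoeff_apply]
  simp [psComp]

lemma psComp_assoc (f : Z⟦X⟧) {g h : Z⟦X⟧} (hg : constantCoeff g = 0)
    (hh : constantCoeff h = 0) : psComp (psComp f g) h = psComp f (psComp g h) := by
  have hgh : constantCoeff (psComp g h) = 0 := by rw [constantCoeff_psComp, hg]
  rw [psComp_eq_subst _ hh, psComp_eq_subst _ hg, psComp_eq_subst _ hgh, psComp_eq_subst _ hh,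
    subst_comp_subst_apply (HasSubst.of_constantCoeff_zero' hg)
      (HasSubst.of_constantCoeff_zero' hh)]

lemma constantCoeff_psIter {ω : Z⟦X⟧} (hω : constantCoeff ω = 0) :
    ∀ m, constantCoeff (psIter ω m) = 0
  | 0 => constantCoeff_X
  | _ + 1 => (constantCoeff_psComp _ _).trans hω

lemma psIter_succ' {ω : Z⟦X⟧} (hω : constantCoeff ω = 0) (m : ℕ) :
    psIter ω (m + 1) = psComp (psIter ω m) ω := by
  induction m with
  | zero =>
    simp only [psIter, psComp_eq_subst _ constantCoeff_X, psComp_eq_subst _ hω, X_subst,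
      subst_X (HasSubst.of_constantCoeff_zero' hω)]
  | succ m ih =>
    calc psIter ω (m + 2) = psComp ω (psComp (psIter ω m) ω) := by rw [← ih]; rfl
      _ = psComp (psIter ω (m + 1)) ω := (psComp_assoc _ (constantCoeff_psIter hω m) hω).symm

lemma coeff_psComp_of_lt {f g : Z⟦X⟧} (hf : constantCoeff f = 0) (hg : constantCoeff g = 0)
    {m K : ℕ} (hm : m < K + 2) :
    coeff m (psComp f g) =
      coeff 1 f * coeff m g + ∑ j ∈ range K, coeff m (g ^ (j + 2)) * coeff (j + 2) f := by
  have hvanish : ∀ j ∈ range (K + 2), j ∉ range (m + 1) → coeff j f * coeff m (g ^ j) = 0 :=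
    fun j _ hj => by rw [coeff_pow_of_lt hg (by simpa using hj), mul_zero]
  rw [psComp, coeff_mk, sum_subset (range_subset_range.mpr hm) hvanish, sum_range_succ',
    sum_range_succ', coeff_zero_eq_constantCoeff_apply, hf, zero_mul, add_zero, pow_one,
    add_comm]
  simp only [mul_comm]

lemma coeff_one_psIter {ω : Z⟦X⟧} (hω0 : constantCoeff ω = 0) (hω1 : coeff 1 ω = 1) :
    ∀ m, coeff 1 (psIter ω m) = 1
  | 0 => coeff_one_X
  | m + 1 => by
    rw [psIter_succ' hω0, coeff_psComp_of_lt (K := 0) (constantCoeff_psIter hω0 m) hω0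
      (by norm_num), coeff_one_psIter hω0 hω1 m, hω1]
    simp

-- `M_k`, `r_k` and `c_k = lowerCoeffs k ω` of the statement.
noncomputable def powCoeffMatrix (ω : Z⟦X⟧) (k : ℕ) : Matrix (Fin (k - 2)) (Fin (k - 2)) Z :=
  of fun i j => coeff ((i : ℕ) + 2) (ω ^ ((j : ℕ) + 2))

noncomputable def powCoeffRow (ω : Z⟦X⟧) (k : ℕ) : Fin (k - 2) → Z :=
  fun j => coeff k (ω ^ ((j : ℕ) + 2))

noncomputable def lowerCoeffs (k : ℕ) (f : Z⟦X⟧) : Fin (k - 2) → Z :=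
  fun j => coeff ((j : ℕ) + 2) f

lemma lowerCoeffs_psComp {ω f : Z⟦X⟧} (hω0 : constantCoeff ω = 0)
    (hf0 : constantCoeff f = 0) (hf1 : coeff 1 f = 1) (k : ℕ) :
    lowerCoeffs k (psComp f ω) = lowerCoeffs k ω + powCoeffMatrix ω k *ᵥ lowerCoeffs k f := by
  ext i
  rw [lowerCoeffs, coeff_psComp_of_lt hf0 hω0 (K := k - 2) (by omega), hf1, one_mul,
    ← Fin.sum_univ_eq_sum_range]
  rfl

lemma coeff_psComp_eq_add_dotProduct {ω f : Z⟦X⟧} (hω0 : constantCoeff ω = 0)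
    (hω1 : coeff 1 ω = 1) (hf0 : constantCoeff f = 0) (hf1 : coeff 1 f = 1) {k : ℕ} (hk : 2 ≤ k) :
    coeff k (psComp f ω) = coeff k ω + powCoeffRow ω k ⬝ᵥ lowerCoeffs k f + coeff k f := by
  rw [coeff_psComp_of_lt hf0 hω0 (K := k - 1) (by omega), hf1, one_mul,
    show k - 1 = k - 2 + 1 by omega, sum_range_succ, ← Fin.sum_univ_eq_sum_range,
    show k - 2 + 2 = k by omega, coeff_pow_self hω0, hω1, one_pow, one_mul, add_assoc]
  rfl

lemma sum_range_sum_range_eq_sum_nsmul {M : Type*} [AddCommMonoid M] (f : ℕ → M) (n : ℕ) :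
    ∑ m ∈ range n, ∑ s ∈ range m, f s = ∑ s ∈ range (n - 1), (n - 1 - s) • f s := by
  have hswap : ∑ m ∈ range n, ∑ s ∈ range m, f s = ∑ s ∈ range n, ∑ _m ∈ Ioo s n, f s :=
    sum_comm' fun m s => by simp only [mem_range, mem_Ioo]; omega
  have hvanish : ∀ s ∈ range n, s ∉ range (n - 1) → (n - 1 - s) • f s = 0 :=
    fun s _ hs => by rw [show n - 1 - s = 0 by simp at hs; omega, zero_smul]
  rw [hswap, sum_subset (range_subset_range.mpr (Nat.sub_le n 1)) hvanish]
  refine sum_congr rfl fun s _ => ?_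
  rw [sum_const, Nat.card_Ioo, Nat.sub_right_comm]

lemma lowerCoeffs_psIter {ω : Z⟦X⟧} (hω0 : constantCoeff ω = 0) (hω1 : coeff 1 ω = 1)
    (k m : ℕ) :
    lowerCoeffs k (psIter ω m) = (∑ s ∈ range m, powCoeffMatrix ω k ^ s) *ᵥ lowerCoeffs k ω := by
  induction m with
  | zero =>
    ext j
    simp [psIter, lowerCoeffs, coeff_X]
  | succ m ih =>
    rw [psIter_succ' hω0, lowerCoeffs_psComp hω0 (constantCoeff_psIter hω0 m)
      (coeff_one_psIter hω0 hω1 m), ih, mulVec_mulVec, geom_sum_succ, add_mulVec, one_mulVec,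
      add_comm]

lemma coeff_psIter {ω : Z⟦X⟧} (hω0 : constantCoeff ω = 0) (hω1 : coeff 1 ω = 1) {k : ℕ}
    (hk : 2 ≤ k) (n : ℕ) :
    coeff k (psIter ω n) = n * coeff k ω + powCoeffRow ω k ⬝ᵥ
      ((∑ m ∈ range n, ∑ s ∈ range m, powCoeffMatrix ω k ^ s) *ᵥ lowerCoeffs k ω) := by
  induction n with
  | zero => simp [psIter, coeff_X, show k ≠ 1 by omega]
  | succ n ih =>
    rw [psIter_succ' hω0, coeff_psComp_eq_add_dotProduct hω0 hω1 (constantCoeff_psIter hω0 n)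
      (coeff_one_psIter hω0 hω1 n) hk, ih, lowerCoeffs_psIter hω0 hω1, sum_range_succ,
      add_mulVec, dotProduct_add]
    push_cast
    ring

lemma eq_iff_coeff_eq_of_two_le {f g : Z⟦X⟧} (h0 : constantCoeff f = constantCoeff g)
    (h1 : coeff 1 f = coeff 1 g) : f = g ↔ ∀ k, 2 ≤ k → coeff k f = coeff k g := by
  refine ⟨fun h _ _ => h ▸ rfl, fun h => ext fun k => ?_⟩
  match k with
  | 0 => simpa using h0
  | 1 => exact h1
  | k + 2 => exact h (k + 2) (by omega)

end

open Matrix in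
theorem roots_order_n_characterization_general {Z : Type*} [CommRing Z] (g ω : Z⟦X⟧)
    (hg0 : constantCoeff g = 0) (hg1 : coeff 1 g = 1)
    (hω0 : constantCoeff ω = 0) (hω1 : coeff 1 ω = 1)
    (n : ℕ) :
    psIter ω n = g ↔
      ((n : Z) * coeff 2 ω = coeff 2 g ∧
        ∀ k : ℕ, 3 ≤ k →
          (n : Z) * coeff k ω =
            coeff k g -
              (fun j : Fin (k - 2) => coeff k (ω ^ ((j : ℕ) + 2))) ⬝ᵥ
                ((∑ s ∈ Finset.range (n - 1),
                    (n - 1 - s) •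
                      (Matrix.of fun i j : Fin (k - 2) =>
                        coeff ((i : ℕ) + 2) (ω ^ ((j : ℕ) + 2))) ^ s) *ᵥ
                  (fun j : Fin (k - 2) => coeff ((j : ℕ) + 2) ω))) := by
  have hcoeff : ∀ k, 2 ≤ k → (coeff k (psIter ω n) = coeff k g ↔
      (n : Z) * coeff k ω = coeff k g - powCoeffRow ω k ⬝ᵥ
        ((∑ s ∈ range (n - 1), (n - 1 - s) • powCoeffMatrix ω k ^ s) *ᵥ lowerCoeffs k ω)) :=
    fun k hk => by
      rw [coeff_psIter hω0 hω1 hk, sum_range_sum_range_eq_sum_nsmul]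
      constructor <;> intro h <;> linear_combination h
  rw [eq_iff_coeff_eq_of_two_le (by rw [constantCoeff_psIter hω0, hg0])
    (by rw [coeff_one_psIter hω0 hω1, hg1])]
  constructor
  · intro h
    exact ⟨by simpa using (hcoeff 2 le_rfl).mp (h 2 le_rfl),
      fun k hk => (hcoeff k (by omega)).mp (h k (by omega))⟩
  · rintro ⟨h2, hhigh⟩ k hk2
    rcases hk2.eq_or_lt with rfl | hk3
    · exact (hcoeff 2 le_rfl).mpr (by simpa using h2)
    · exact (hcoeff k hk2).mpr (hhigh k hk3)

open Matrix in
/-- for `g, ω ∈ 𝒥(Z)` and `n ≥ 2`, `ω^[n] = g` iff `n·ω₂ = g₂` and, for all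
`k ≥ 3`, `n·ω_k = g_k − r_k (∑_{s=0}^{n−2} (n−1−s)·M_k^s) c_k`, where
`(M_k)_{i,j} = [x^{i+2}](ω^{j+2})`, `(r_k)_j = [x^k](ω^{j+2})` and `(c_k)_j = ω_{j+2}`. -/
theorem roots_order_n_characterization {Z : Type*} [CommRing Z] (g ω : Z⟦X⟧)
    (hg0 : constantCoeff g = 0) (hg1 : coeff 1 g = 1)
    (hω0 : constantCoeff ω = 0) (hω1 : coeff 1 ω = 1)
    (n : ℕ) (hn : 2 ≤ n) :
    psIter ω n = g ↔
      ((n : Z) * coeff 2 ω = coeff 2 g ∧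
        ∀ k : ℕ, 3 ≤ k →
          (n : Z) * coeff k ω =
            coeff k g -
              (fun j : Fin (k - 2) => coeff k (ω ^ ((j : ℕ) + 2))) ⬝ᵥ
                ((∑ s ∈ Finset.range (n - 1),
                    (n - 1 - s) •
                      (Matrix.of fun i j : Fin (k - 2) =>
                        coeff ((i : ℕ) + 2) (ω ^ ((j : ℕ) + 2))) ^ s) *ᵥ
                  (fun j : Fin (k - 2) => coeff ((j : ℕ) + 2) ω))) :=
  roots_order_n_characterization_general g ω hg0 hg1 hω0 hω1 n
end

section
/- Let Z be a nontrivial commutative ring with unity of characteristic p > 0, and let ω = x + x² + x³ + ⋯ = x/(1−x) ∈ J(Z) (the power series whose coefficient of x^k is 1 for every k ≥ 1). Then for every m ≥ 0, the m-th compositional iterate ω^[m] equals x if and only if p divides m. In particular ω is an element of J(Z) of finite order exactly p, distinct from the identity x. -/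
open PowerSeries Finset

/-!
With `psGeom c = x/(1 - c x) = ∑ c^(k-1) x^k`, we have `ω = psGeom 1`, and substituting
`g = psGeom c` into `ω` gives `g/(1 - g) = x/(1 - (c+1) x) = psGeom (c + 1)`. Hence
`ω^[m] = psGeom m`, whose coefficient of `x²` is `m`, so `ω^[m] = x` exactly when `m = 0` in `Z`,
i.e. when `p ∣ m`.
-/

noncomputable def psGeom {Z : Type*} [CommRing Z] (c : Z) : Z⟦X⟧ :=
  PowerSeries.mk fun k => if k = 0 then 0 else c ^ (k - 1)

section
variable {Z : Type*} [CommRing Z]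

lemma X_pow_dvd_psComp_sub_sum (f : Z⟦X⟧) {g : Z⟦X⟧} (hg : constantCoeff g = 0) (n : ℕ) :
    X ^ (n + 1) ∣ psComp f g - ∑ j ∈ range (n + 1), C (coeff j f) * g ^ j := by
  refine X_pow_dvd_iff.mpr fun i hi => ?_
  have hvanish : ∀ j, i < j → coeff i (g ^ j) = 0 := fun j hj =>
    X_pow_dvd_iff.mp (pow_dvd_pow_of_dvd (X_dvd_iff.mpr hg) j) i hj
  rw [map_sub, psComp, coeff_mk, map_sum, sub_eq_zero]
  simp only [coeff_C_mul]
  refine Finset.sum_subset (range_subset_range.mpr (by omega)) fun j _ hj => ?_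
  rw [hvanish j (by simpa using hj), mul_zero]

lemma constantCoeff_psGeom (c : Z) : constantCoeff (psGeom c) = 0 := by
  simp [psGeom]

lemma psGeom_eq_X_mul_rescale (c : Z) : psGeom c = X * rescale c (mk 1) := by
  ext (_ | k) <;> simp [psGeom, rescale_mk, coeff_succ_X_mul]

lemma psGeom_mul_one_sub_C_mul_X (c : Z) : psGeom c * (1 - C c * X) = X := by
  rw [psGeom_eq_X_mul_rescale, ← rescale_X, ← map_one (rescale c), ← map_sub, mul_assoc,
    ← map_mul, mk_one_mul_one_sub_eq_one, map_one, mul_one]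

lemma eq_psGeom_of_mul_one_sub_C_mul_X {c : Z} {h : Z⟦X⟧} (hh : h * (1 - C c * X) = X) :
    h = psGeom c := by
  have hunit : IsUnit (1 - C c * X) := by simp [isUnit_iff_constantCoeff]
  exact hunit.mul_right_cancel (hh.trans (psGeom_mul_one_sub_C_mul_X c).symm)

lemma psGeom_zero : psGeom (0 : Z) = X := by
  simpa using psGeom_mul_one_sub_C_mul_X (0 : Z)

lemma psGeom_eq_X_iff [Nontrivial Z] {c : Z} : psGeom c = X ↔ c = 0 := by
  refine ⟨fun h => ?_, fun hc => hc ▸ psGeom_zero⟩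
  simpa [psGeom, coeff_X] using congrArg (coeff 2) h

lemma psComp_psGeom_one_mul_one_sub {g : Z⟦X⟧} (hg : constantCoeff g = 0) :
    psComp (psGeom 1) g * (1 - g) = g := by
  ext n
  set S := ∑ j ∈ range (n + 1), C (coeff j (psGeom (1 : Z))) * g ^ j
  have hS : S = g * ∑ i ∈ range n, g ^ i := by
    simp [S, sum_range_succ', psGeom, pow_succ', mul_sum]
  have hdvd : X ^ (n + 1) ∣ psComp (psGeom 1) g * (1 - g) - g :=
    calc X ^ (n + 1) ∣ (psComp (psGeom 1) g - S) * (1 - g) - g ^ (n + 1) :=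
          dvd_sub (dvd_mul_of_dvd_left (X_pow_dvd_psComp_sub_sum _ hg n) _)
            (pow_dvd_pow_of_dvd (X_dvd_iff.mpr hg) _)
      _ = psComp (psGeom 1) g * (1 - g) - g := by
            rw [sub_mul, hS, mul_assoc, geom_sum_mul_neg]; ring
  simpa [sub_eq_zero] using X_pow_dvd_iff.mp hdvd n n.lt_succ_self

lemma psComp_psGeom_one_psGeom (c : Z) : psComp (psGeom 1) (psGeom c) = psGeom (c + 1) := by
  refine eq_psGeom_of_mul_one_sub_C_mul_X ?_
  have hfactor : 1 - C (c + 1) * X = (1 - psGeom c) * (1 - C c * X) := by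
    rw [sub_mul, psGeom_mul_one_sub_C_mul_X, map_add, map_one]; ring
  rw [hfactor, ← mul_assoc, psComp_psGeom_one_mul_one_sub (constantCoeff_psGeom c),
    psGeom_mul_one_sub_C_mul_X]

lemma psIter_psGeom_one (m : ℕ) : psIter (psGeom (1 : Z)) m = psGeom (m : Z) := by
  induction m with
  | zero => rw [Nat.cast_zero, psGeom_zero, psIter]
  | succ m ih => rw [psIter, ih, psComp_psGeom_one_psGeom, Nat.cast_succ]

end

theorem geometric_series_order_p_general {Z : Type*} [CommRing Z] [Nontrivial Z]
    (p : ℕ) [CharP Z p] :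
    (∀ m : ℕ, psIter (PowerSeries.mk fun k => if k = 0 then (0 : Z) else 1) m
        = PowerSeries.X ↔ p ∣ m) ∧
      (PowerSeries.mk fun k => if k = 0 then (0 : Z) else 1) ≠ PowerSeries.X := by
  have hω : (PowerSeries.mk fun k => if k = 0 then (0 : Z) else 1) = psGeom 1 := by
    simp [psGeom]
  rw [hω]
  refine ⟨fun m => ?_, ?_⟩
  · rw [psIter_psGeom_one, psGeom_eq_X_iff, CharP.cast_eq_zero_iff Z p]
  · rw [Ne, psGeom_eq_X_iff]
    exact one_ne_zero

/-- over a nontrivial commutative ring of characteristic `p > 0`, the series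
`ω = x + x² + x³ + ⋯ = x/(1−x)` satisfies `ω^[m] = x` iff `p ∣ m`; in particular `ω` is an
element of `𝒥(Z)` of finite order exactly `p`, distinct from the identity `x`. -/
theorem geometric_series_order_p {Z : Type*} [CommRing Z] [Nontrivial Z]
    (p : ℕ) [CharP Z p] (hp : 0 < p) :
    (∀ m : ℕ, psIter (PowerSeries.mk fun k => if k = 0 then (0 : Z) else 1) m
        = PowerSeries.X ↔ p ∣ m) ∧
      (PowerSeries.mk fun k => if k = 0 then (0 : Z) else 1) ≠ PowerSeries.X :=
  geometric_series_order_p_general p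
end

section
/- The group J(ℤ) is an URE-group: for every g ∈ J(ℤ), every integer n ≥ 1, and every ω, ω′ ∈ J(ℤ), if ω^[n] = g and ω′^[n] = g then ω = ω′. -/
open PowerSeries Finset

/-!
Membership in `J(R)` is encoded as `X ^ 2 ∣ τ - X`, and agreement of two series below degree `k`
as `X ^ k ∣ τ - τ'`. If `ω, ω' ∈ J(R)` agree below degree `k ≥ 2`, then in `ω ∘ τ` the
`X ^ k`-coefficient is `τ_k + ω_k` plus terms involving only lower coefficients of `ω` and `τ`.
By induction the `m`-th iterates agree below degree `k` and their `X ^ k`-coefficients differ by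
`m • (ω_k - ω'_k)`. If the `n`-th iterates coincide and `R` is torsion-free, then `ω_k = ω'_k`,
so `ω` and `ω'` agree to every order.
-/

section

variable {R : Type*} [CommRing R]

theorem coeff_psComp (f g : R⟦X⟧) (n : ℕ) :
    coeff n (psComp f g) = ∑ j ∈ range (n + 1), coeff j f * coeff n (g ^ j) :=
  coeff_mk _ _

theorem coeff_eq_of_X_pow_dvd_sub {f g : R⟦X⟧} {k m : ℕ} (h : X ^ k ∣ f - g) (hm : m < k) :
    coeff m f = coeff m g :=
  sub_eq_zero.1 (by simpa using X_pow_dvd_iff.1 h m hm)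

theorem X_pow_succ_dvd_of_coeff_eq_zero {f : R⟦X⟧} {k : ℕ} (h : X ^ k ∣ f)
    (hk : coeff k f = 0) : X ^ (k + 1) ∣ f :=
  X_pow_dvd_iff.2 fun m hm =>
    (Nat.lt_succ_iff_lt_or_eq.1 hm).elim (X_pow_dvd_iff.1 h m) fun hmk => hmk ▸ hk

theorem X_sq_dvd_sub_X_iff {τ : R⟦X⟧} :
    X ^ 2 ∣ τ - X ↔ constantCoeff τ = 0 ∧ coeff 1 τ = 1 := by
  simp [X_pow_dvd_iff, Nat.le_one_iff_eq_zero_or_eq_one, or_imp, forall_and, sub_eq_zero]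

theorem X_dvd_of_X_sq_dvd_sub_X {τ : R⟦X⟧} (h : X ^ 2 ∣ τ - X) : X ∣ τ :=
  X_dvd_iff.2 (X_sq_dvd_sub_X_iff.1 h).1

theorem X_pow_add_dvd_pow_sub_pow {τ τ' : R⟦X⟧} {k : ℕ} (hτ : X ∣ τ) (hτ' : X ∣ τ')
    (h : X ^ k ∣ τ - τ') (j : ℕ) : X ^ (k + j) ∣ τ ^ (j + 1) - τ' ^ (j + 1) := by
  induction j with
  | zero => simpa using h
  | succ j ih =>
    have hsplit : τ ^ (j + 2) - τ' ^ (j + 2) =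
        τ * (τ ^ (j + 1) - τ' ^ (j + 1)) + τ' ^ (j + 1) * (τ - τ') := by ring
    rw [hsplit]
    refine dvd_add ?_ ?_
    · rw [← add_assoc, pow_succ']; exact mul_dvd_mul hτ ih
    · rw [add_comm, pow_add]; exact mul_dvd_mul (pow_dvd_pow_of_dvd hτ' _) h

theorem coeff_pow_eq_of_X_pow_dvd_sub {τ τ' : R⟦X⟧} {k j m : ℕ} (hτ : X ∣ τ) (hτ' : X ∣ τ')
    (h : X ^ k ∣ τ - τ') (hj : j ≠ 0) (hm : m + 1 < k + j) :
    coeff m (τ ^ j) = coeff m (τ' ^ j) := by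
  obtain ⟨j, rfl⟩ := Nat.exists_eq_add_one_of_ne_zero hj
  exact coeff_eq_of_X_pow_dvd_sub (X_pow_add_dvd_pow_sub_pow hτ hτ' h j) (by omega)

theorem coeff_pow_self_of_X_sq_dvd_sub_X {τ : R⟦X⟧} (h : X ^ 2 ∣ τ - X) (k : ℕ) :
    coeff k (τ ^ k) = 1 := by
  rcases k with _ | k
  · simp
  · rw [coeff_pow_eq_of_X_pow_dvd_sub (X_dvd_of_X_sq_dvd_sub_X h) dvd_rfl h k.succ_ne_zero
      (by omega), coeff_X_pow_self]

theorem psComp_X_left {τ : R⟦X⟧} (hτ : constantCoeff τ = 0) : psComp X τ = τ := by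
  ext n
  rw [coeff_psComp, sum_eq_single 1 (fun j _ hj => by simp [coeff_X, hj]) ?_]
  · simp
  · intro h1
    obtain rfl : n = 0 := by simpa using h1
    simp [hτ]

theorem X_pow_dvd_psComp_sub_psComp {ω ω' τ τ' : R⟦X⟧} {k : ℕ} (hτ : X ∣ τ) (hτ' : X ∣ τ')
    (hω : X ^ k ∣ ω - ω') (hττ' : X ^ k ∣ τ - τ') : X ^ k ∣ psComp ω τ - psComp ω' τ' := by
  refine X_pow_dvd_iff.2 fun m hm => ?_
  rw [map_sub, sub_eq_zero, coeff_psComp, coeff_psComp]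
  refine sum_congr rfl fun j hj => ?_
  have hjm : j ≤ m := Nat.lt_succ_iff.1 (mem_range.1 hj)
  rw [coeff_eq_of_X_pow_dvd_sub hω (hjm.trans_lt hm)]
  rcases eq_or_ne j 0 with rfl | hj0
  · rfl
  · rw [coeff_pow_eq_of_X_pow_dvd_sub hτ hτ' hττ' hj0 (by omega)]

theorem X_sq_dvd_psIter_sub_X {ω : R⟦X⟧} (hω : X ^ 2 ∣ ω - X) (m : ℕ) :
    X ^ 2 ∣ psIter ω m - X := by
  induction m with
  | zero => simp [psIter]
  | succ m ih =>
    have h := X_pow_dvd_psComp_sub_psComp (X_dvd_of_X_sq_dvd_sub_X ih) dvd_rfl hω ih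
    rwa [psComp_X_left constantCoeff_X] at h

theorem X_pow_dvd_psIter_sub_psIter {ω ω' : R⟦X⟧} {k : ℕ} (hω : X ^ 2 ∣ ω - X)
    (hω' : X ^ 2 ∣ ω' - X) (h : X ^ k ∣ ω - ω') (m : ℕ) :
    X ^ k ∣ psIter ω m - psIter ω' m := by
  induction m with
  | zero => simp [psIter]
  | succ m ih =>
    exact X_pow_dvd_psComp_sub_psComp (X_dvd_of_X_sq_dvd_sub_X (X_sq_dvd_psIter_sub_X hω m))
      (X_dvd_of_X_sq_dvd_sub_X (X_sq_dvd_psIter_sub_X hω' m)) h ih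

theorem coeff_psComp_sub_psComp {ω ω' τ τ' : R⟦X⟧} {k : ℕ} (hk : 2 ≤ k) (hω1 : coeff 1 ω = 1)
    (hτ : X ^ 2 ∣ τ - X) (hτ' : X ^ 2 ∣ τ' - X) (hω : X ^ k ∣ ω - ω')
    (hττ' : X ^ k ∣ τ - τ') :
    coeff k (psComp ω τ - psComp ω' τ') = coeff k (τ - τ') + coeff k (ω - ω') := by
  have hlow : ∑ j ∈ range k, (coeff j ω * coeff k (τ ^ j) - coeff j ω' * coeff k (τ' ^ j)) =
      coeff k (τ - τ') := by
    rw [sum_eq_single 1]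
    · rw [← coeff_eq_of_X_pow_dvd_sub hω (by omega), hω1, pow_one, pow_one, map_sub]
      ring
    · intro j hj hj1
      rw [← coeff_eq_of_X_pow_dvd_sub hω (mem_range.1 hj), ← mul_sub]
      rcases eq_or_ne j 0 with rfl | hj0
      · simp
      · rw [coeff_pow_eq_of_X_pow_dvd_sub (X_dvd_of_X_sq_dvd_sub_X hτ)
          (X_dvd_of_X_sq_dvd_sub_X hτ') hττ' hj0 (by omega), sub_self, mul_zero]
    · intro h1
      exact absurd (mem_range.2 (by omega)) h1
  rw [map_sub, coeff_psComp, coeff_psComp, ← sum_sub_distrib, sum_range_succ, hlow,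
    coeff_pow_self_of_X_sq_dvd_sub_X hτ, coeff_pow_self_of_X_sq_dvd_sub_X hτ', map_sub, map_sub]
  ring

theorem coeff_psIter_sub_psIter {ω ω' : R⟦X⟧} {k : ℕ} (hk : 2 ≤ k) (hω : X ^ 2 ∣ ω - X)
    (hω' : X ^ 2 ∣ ω' - X) (h : X ^ k ∣ ω - ω') (m : ℕ) :
    coeff k (psIter ω m - psIter ω' m) = m • coeff k (ω - ω') := by
  induction m with
  | zero => simp [psIter]
  | succ m ih =>
    rw [psIter, psIter, coeff_psComp_sub_psComp hk (X_sq_dvd_sub_X_iff.1 hω).2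
      (X_sq_dvd_psIter_sub_X hω m) (X_sq_dvd_psIter_sub_X hω' m) h
      (X_pow_dvd_psIter_sub_psIter hω hω' h m), ih, succ_nsmul]

theorem eq_of_psIter_eq [IsAddTorsionFree R] {ω ω' : R⟦X⟧} (hω : X ^ 2 ∣ ω - X)
    (hω' : X ^ 2 ∣ ω' - X) {n : ℕ} (hn : n ≠ 0) (h : psIter ω n = psIter ω' n) : ω = ω' := by
  have hdvd : ∀ k, X ^ (k + 2) ∣ ω - ω' := by
    intro k
    induction k with
    | zero => simpa using dvd_sub hω hω'
    | succ k ih =>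
      refine X_pow_succ_dvd_of_coeff_eq_zero ih ?_
      have hcoeff := coeff_psIter_sub_psIter (by omega) hω hω' ih n
      rwa [h, sub_self, map_zero, eq_comm, nsmul_eq_zero_iff_right hn] at hcoeff
  ext k
  exact coeff_eq_of_X_pow_dvd_sub (hdvd k) (by omega)

end

theorem substitution_group_int_URE_general (g : ℤ⟦X⟧)
    (n : ℕ) (hn : 1 ≤ n) (ω ω' : ℤ⟦X⟧)
    (hω0 : constantCoeff ω = 0) (hω1 : coeff 1 ω = 1)
    (hω'0 : constantCoeff ω' = 0) (hω'1 : coeff 1 ω' = 1)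
    (hroot : psIter ω n = g) (hroot' : psIter ω' n = g) :
    ω = ω' :=
  eq_of_psIter_eq (X_sq_dvd_sub_X_iff.2 ⟨hω0, hω1⟩) (X_sq_dvd_sub_X_iff.2 ⟨hω'0, hω'1⟩)
    (Nat.one_le_iff_ne_zero.1 hn) (hroot.trans hroot'.symm)

/-- `𝒥(ℤ)` is an URE-group: iterative roots of any order `n ≥ 1` are unique. -/
theorem substitution_group_int_URE (g : ℤ⟦X⟧)
    (hg0 : constantCoeff g = 0) (hg1 : coeff 1 g = 1)
    (n : ℕ) (hn : 1 ≤ n) (ω ω' : ℤ⟦X⟧)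
    (hω0 : constantCoeff ω = 0) (hω1 : coeff 1 ω = 1)
    (hω'0 : constantCoeff ω' = 0) (hω'1 : coeff 1 ω' = 1)
    (hroot : psIter ω n = g) (hroot' : psIter ω' n = g) :
    ω = ω' :=
  substitution_group_int_URE_general g n hn ω ω' hω0 hω1 hω'0 hω'1 hroot hroot'
end

section
/- The group J(ℤ) is not algebraically complete: for every integer n ≥ 2, the element g = x + x² of J(ℤ) has no root of order n, i.e., there is no ω ∈ J(ℤ) with ω^[n] = x + x². -/
/-! The coefficient of `x²` is additive on `J(R)`: `[x²](f ∘ g) = [x²] f + [x²] g` when `f` and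
`g` are tangent to the identity. Hence `[x²] ω^[n] = n · [x²] ω`, which is never `1` in `ℤ`
when `n ≥ 2`, whereas `[x²](x + x²) = 1`. -/

open PowerSeries Finset

section Composition

variable {R : Type*} [CommRing R]

theorem coeff_zero_psComp (f g : R⟦X⟧) : coeff 0 (psComp f g) = coeff 0 f := by
  simp [psComp]

theorem coeff_one_psComp (f g : R⟦X⟧) : coeff 1 (psComp f g) = coeff 1 f * coeff 1 g := by
  simp [psComp, sum_range_succ, coeff_one]

theorem coeff_two_pow_two {g : R⟦X⟧} (hg : coeff 0 g = 0) : coeff 2 (g ^ 2) = coeff 1 g ^ 2 := by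
  rw [pow_two, coeff_mul, Nat.sum_antidiagonal_eq_sum_range_succ_mk]
  simp [sum_range_succ, hg, pow_two]

theorem coeff_two_psComp (f : R⟦X⟧) {g : R⟦X⟧} (hg : coeff 0 g = 0) :
    coeff 2 (psComp f g) = coeff 1 f * coeff 2 g + coeff 2 f * coeff 1 g ^ 2 := by
  simp [psComp, sum_range_succ, coeff_one, coeff_two_pow_two hg]

end Composition

section Iteration

variable {R : Type*} [CommRing R] {ω : R⟦X⟧}

theorem coeff_zero_psIter (h0 : coeff 0 ω = 0) (m : ℕ) : coeff 0 (psIter ω m) = 0 := by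
  induction m with
  | zero => simp [psIter]
  | succ m _ => rw [psIter, coeff_zero_psComp, h0]

theorem coeff_one_psIter_s11 (ω : R⟦X⟧) (m : ℕ) : coeff 1 (psIter ω m) = coeff 1 ω ^ m := by
  induction m with
  | zero => simp [psIter]
  | succ m ih => rw [psIter, coeff_one_psComp, ih, pow_succ']

theorem coeff_two_psIter (h0 : coeff 0 ω = 0) (h1 : coeff 1 ω = 1) (m : ℕ) :
    coeff 2 (psIter ω m) = m * coeff 2 ω := by
  induction m with
  | zero => simp [psIter, coeff_X]
  | succ m ih =>
    rw [psIter, coeff_two_psComp _ (coeff_zero_psIter h0 m), ih, coeff_one_psIter_s11, h1]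
    push_cast
    ring

end Iteration

/-- `𝒥(ℤ)` is not algebraically complete: for every `n ≥ 2`, the element
`g = x + x²` has no iterative root of order `n` in `𝒥(ℤ)`. -/
theorem substitution_group_int_not_complete (n : ℕ) (hn : 2 ≤ n) :
    ¬ ∃ ω : ℤ⟦X⟧, (constantCoeff ω = 0 ∧ coeff 1 ω = 1) ∧
        psIter ω n = PowerSeries.X + PowerSeries.X ^ 2 := by
  rintro ⟨ω, ⟨h0, h1⟩, hroot⟩
  have h2 : (n : ℤ) * coeff 2 ω = 1 := by
    rw [← coeff_two_psIter (by rwa [coeff_zero_eq_constantCoeff]) h1, hroot]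
    simp [coeff_X, coeff_X_pow]
  have : (n : ℤ) = 1 := Int.eq_one_of_mul_eq_one_right (Int.natCast_nonneg n) h2
  omega
end

section
/- Let g = x + g₂x² + g₃x³ + g₄x⁴ + ⋯ ∈ J(ℤ). Then there exists ω ∈ J(ℤ) such that the coefficients of x², x³ and x⁴ of ω ∘ ω agree with those of g (equivalently, R₄(1,g) admits a square root in L′₄(ℤ)) if and only if 2 ∣ g₂, 4 ∣ (2g₃ − g₂²) and 16 ∣ (8g₄ − 10g₂g₃ + 4g₂³). Moreover, any such ω satisfies 2ω₂ = g₂, 4ω₃ = 2g₃ − g₂², and 16ω₄ = 8g₄ − 10g₂g₃ + 4g₂³; in particular, if g admits an iterative square root in J(ℤ) then these three divisibility conditions hold. -/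
open PowerSeries Finset

/-!
Writing `ω = x + ω₂x² + ω₃x³ + ω₄x⁴ + ⋯`, the coefficients of `x², x³, x⁴` in `ω ∘ ω` are
`2ω₂`, `2ω₃ + 2ω₂²` and `2ω₄ + 5ω₂ω₃ + ω₂³`. This triangular system is solved for `ω₂, ω₃, ω₄`
by eliminating `ω₂` and `ω₃`, which gives the three stated identities; over `ℤ` the system has
an integral solution exactly when the right-hand sides `g₂`, `2g₃ − g₂²`, `8g₄ − 10g₂g₃ + 4g₂³`
are divisible by `2`, `4`, `16`, and then the truncated polynomial `x + ω₂x² + ω₃x³ + ω₄x⁴`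
is a square root.
-/

section

variable {R : Type*} [CommRing R]

theorem coeff_psComp_self_two_three_four {ω : R⟦X⟧} (h0 : constantCoeff ω = 0)
    (h1 : coeff 1 ω = 1) :
    coeff 2 (psComp ω ω) = 2 * coeff 2 ω ∧
    coeff 3 (psComp ω ω) = 2 * coeff 3 ω + 2 * coeff 2 ω ^ 2 ∧
    coeff 4 (psComp ω ω) = 2 * coeff 4 ω + 5 * coeff 2 ω * coeff 3 ω + coeff 2 ω ^ 3 := by
  have h0' : coeff 0 ω = 0 := by simpa using h0
  refine ⟨?_, ?_, ?_⟩ <;>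
  · simp [psComp, sum_range_succ, coeff_mul, Nat.sum_antidiagonal_eq_sum_range_succ_mk,
      pow_succ, h0', h1]
    ring

theorem exists_coeff_two_three_four_eq (a b c : R) :
    ∃ ω : R⟦X⟧, constantCoeff ω = 0 ∧ coeff 1 ω = 1 ∧
      coeff 2 ω = a ∧ coeff 3 ω = b ∧ coeff 4 ω = c :=
  ⟨X + C a * X ^ 2 + C b * X ^ 3 + C c * X ^ 4, by simp, by simp [coeff_X],
    by simp [coeff_X, coeff_X_pow], by simp [coeff_X, coeff_X_pow],
    by simp [coeff_X, coeff_X_pow]⟩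

theorem coeff_two_three_four_of_coeff_psComp_self_eq {ω g : R⟦X⟧}
    (h0 : constantCoeff ω = 0) (h1 : coeff 1 ω = 1)
    (h : ∀ i : ℕ, 2 ≤ i → i ≤ 4 → coeff i (psComp ω ω) = coeff i g) :
    2 * coeff 2 ω = coeff 2 g ∧
      4 * coeff 3 ω = 2 * coeff 3 g - coeff 2 g ^ 2 ∧
      16 * coeff 4 ω = 8 * coeff 4 g - 10 * coeff 2 g * coeff 3 g + 4 * coeff 2 g ^ 3 := by
  obtain ⟨k2, k3, k4⟩ := coeff_psComp_self_two_three_four h0 h1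
  have e2 := k2.symm.trans (h 2 le_rfl (by norm_num))
  have e3 := k3.symm.trans (h 3 (by norm_num) (by norm_num))
  have e4 := k4.symm.trans (h 4 (by norm_num) le_rfl)
  refine ⟨e2, ?_, ?_⟩
  · linear_combination 2 * e3 - (coeff 2 g + 2 * coeff 2 ω) * e2
  · linear_combination 8 * e4 - 10 * coeff 2 g * e3 +
      (-20 * coeff 3 ω + 4 * coeff 2 g ^ 2 + 8 * coeff 2 g * coeff 2 ω -
        4 * coeff 2 ω ^ 2) * e2

theorem coeff_psComp_self_eq_iff [IsDomain R] [CharZero R] {ω g : R⟦X⟧}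
    (h0 : constantCoeff ω = 0) (h1 : coeff 1 ω = 1) :
    (∀ i : ℕ, 2 ≤ i → i ≤ 4 → coeff i (psComp ω ω) = coeff i g) ↔
      (2 * coeff 2 ω = coeff 2 g ∧
        4 * coeff 3 ω = 2 * coeff 3 g - coeff 2 g ^ 2 ∧
        16 * coeff 4 ω = 8 * coeff 4 g - 10 * coeff 2 g * coeff 3 g + 4 * coeff 2 g ^ 3) := by
  refine ⟨coeff_two_three_four_of_coeff_psComp_self_eq h0 h1, ?_⟩
  obtain ⟨k2, k3, k4⟩ := coeff_psComp_self_two_three_four h0 h1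
  rintro ⟨e2, e3, e4⟩ i hi2 hi4
  have f3 : coeff 3 (psComp ω ω) = coeff 3 g := by
    refine mul_left_cancel₀ (two_ne_zero : (2 : R) ≠ 0) ?_
    linear_combination 2 * k3 + e3 + (2 * coeff 2 ω + coeff 2 g) * e2
  have f4 : coeff 4 (psComp ω ω) = coeff 4 g := by
    refine mul_left_cancel₀ (by norm_num : (8 : R) ≠ 0) ?_
    linear_combination 8 * k4 + e4 + 5 * coeff 2 g * e3 +
      (20 * coeff 3 ω + 4 * coeff 2 ω ^ 2 + 2 * coeff 2 ω * coeff 2 g + coeff 2 g ^ 2) * e2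
  interval_cases i
  · exact k2.trans e2
  · exact f3
  · exact f4

end

theorem square_root_truncation_four_general (g : ℤ⟦X⟧) :
    ((∃ ω : ℤ⟦X⟧, (constantCoeff ω = 0 ∧ coeff 1 ω = 1) ∧
        ∀ i : ℕ, 2 ≤ i → i ≤ 4 → coeff i (psComp ω ω) = coeff i g) ↔
      (2 ∣ coeff 2 g ∧ 4 ∣ (2 * coeff 3 g - (coeff 2 g) ^ 2) ∧
        16 ∣ (8 * coeff 4 g - 10 * coeff 2 g * coeff 3 g + 4 * (coeff 2 g) ^ 3))) ∧
    (∀ ω : ℤ⟦X⟧, constantCoeff ω = 0 → coeff 1 ω = 1 →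
      (∀ i : ℕ, 2 ≤ i → i ≤ 4 → coeff i (psComp ω ω) = coeff i g) →
      (2 * coeff 2 ω = coeff 2 g ∧
        4 * coeff 3 ω = 2 * coeff 3 g - (coeff 2 g) ^ 2 ∧
        16 * coeff 4 ω =
          8 * coeff 4 g - 10 * coeff 2 g * coeff 3 g + 4 * (coeff 2 g) ^ 3)) := by
  refine ⟨⟨?_, ?_⟩, fun ω h0 h1 => coeff_two_three_four_of_coeff_psComp_self_eq h0 h1⟩
  · rintro ⟨ω, ⟨h0, h1⟩, hω⟩
    obtain ⟨e2, e3, e4⟩ := coeff_two_three_four_of_coeff_psComp_self_eq h0 h1 hω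
    exact ⟨⟨_, e2.symm⟩, ⟨_, e3.symm⟩, ⟨_, e4.symm⟩⟩
  · rintro ⟨⟨a, ha⟩, ⟨b, hb⟩, ⟨c, hc⟩⟩
    obtain ⟨ω, h0, h1, h2, h3, h4⟩ := exists_coeff_two_three_four_eq a b c
    refine ⟨ω, ⟨h0, h1⟩, (coeff_psComp_self_eq_iff h0 h1).mpr ?_⟩
    rw [h2, h3, h4]
    exact ⟨ha.symm, hb.symm, hc.symm⟩

/-- for `g ∈ 𝒥(ℤ)`, the truncation `R₄(1,g)` admits a square root in `ℒ′₄(ℤ)`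
iff `2 ∣ g₂`, `4 ∣ (2g₃ − g₂²)` and `16 ∣ (8g₄ − 10g₂g₃ + 4g₂³)`; moreover any square root
satisfies `2ω₂ = g₂`, `4ω₃ = 2g₃ − g₂²` and `16ω₄ = 8g₄ − 10g₂g₃ + 4g₂³`. In particular
these divisibility conditions are necessary for `g` to have an iterative square root. -/
theorem square_root_truncation_four (g : ℤ⟦X⟧)
    (hg0 : constantCoeff g = 0) (hg1 : coeff 1 g = 1) :
    ((∃ ω : ℤ⟦X⟧, (constantCoeff ω = 0 ∧ coeff 1 ω = 1) ∧
        ∀ i : ℕ, 2 ≤ i → i ≤ 4 → coeff i (psComp ω ω) = coeff i g) ↔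
      (2 ∣ coeff 2 g ∧ 4 ∣ (2 * coeff 3 g - (coeff 2 g) ^ 2) ∧
        16 ∣ (8 * coeff 4 g - 10 * coeff 2 g * coeff 3 g + 4 * (coeff 2 g) ^ 3))) ∧
    (∀ ω : ℤ⟦X⟧, constantCoeff ω = 0 → coeff 1 ω = 1 →
      (∀ i : ℕ, 2 ≤ i → i ≤ 4 → coeff i (psComp ω ω) = coeff i g) →
      (2 * coeff 2 ω = coeff 2 g ∧
        4 * coeff 3 ω = 2 * coeff 3 g - (coeff 2 g) ^ 2 ∧
        16 * coeff 4 ω =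
          8 * coeff 4 g - 10 * coeff 2 g * coeff 3 g + 4 * (coeff 2 g) ^ 3)) :=
  square_root_truncation_four_general g
end
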